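/- arXiv:1109.3641 — 3 statements merged into one kernel-verified Lean document; each statement's English description precedes it below -/
import Mathlib

section
/- An ascent sequence avoids the pattern 001 if and only if it consists of a strictly increasing prefix 0,1,2,...,k followed by a weakly decreasing sequence of letters each at most k. Consequently the number of ascent sequences of length n avoiding 001 is 2^{n-1}. -/
/-
An ascent sequence avoiding 001 starts 0, 1, …, m and then continues with a letter other than
m + 1; since the prefix has only m ascents, that letter is at most m. From then on every letter
has already occurred in the prefix 0, 1, …, m, so avoiding 001 forbids any later rise: the
rest is weakly decreasing. Conversely, such a sequence is an ascent sequence and avoids 001,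
because its prefix has no repeated letter and its tail no rise. For fixed m the tails of
length n - 1 - m are the weakly decreasing words over {0, …, m}, counted by C(n - 1, m),
and summing over m gives 2^(n-1).
-/

def ascList (l : List ℕ) : ℕ :=
  (l.zip l.tail).countP (fun p => decide (p.1 < p.2))

def IsAscSeq (l : List ℕ) : Prop :=
  l ≠ [] ∧ l.getD 0 0 = 0 ∧
    ∀ i, 0 < i → i < l.length → l.getD i 0 ≤ ascList (l.take i) + 1

def Contains001 (l : List ℕ) : Prop :=
  ∃ i j k, i < j ∧ j < k ∧ k < l.length ∧
    l.getD i 0 = l.getD j 0 ∧ l.getD j 0 < l.getD k 0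

theorem ascList_cons_cons (x y : ℕ) (t : List ℕ) :
    ascList (x :: y :: t) = (if x < y then 1 else 0) + ascList (y :: t) := by
  simp only [ascList, List.tail_cons, List.zip_cons_cons, List.countP_cons, decide_eq_true_eq]
  split <;> omega

theorem ascList_le_ascList_append (a b : List ℕ) : ascList a ≤ ascList (a ++ b) := by
  induction a with
  | nil => simp [ascList]
  | cons x a ih =>
    cases a with
    | nil => simp [ascList]
    | cons y t =>
      simp only [List.cons_append, ascList_cons_cons] at ih ⊢
      omega

theorem ascList_eq_length_sub_one {l : List ℕ} (h : l.IsChain (· < ·)) :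
    ascList l = l.length - 1 := by
  induction l with
  | nil => rfl
  | cons x l ih =>
    cases l with
    | nil => rfl
    | cons y t =>
      rw [List.isChain_cons_cons] at h
      rw [ascList_cons_cons, if_pos h.1, ih h.2]
      simp [Nat.add_comm]

theorem ascList_range (n : ℕ) : ascList (List.range n) = n - 1 := by
  rw [ascList_eq_length_sub_one List.pairwise_lt_range.isChain, List.length_range]

theorem contains001_iff_sublist {l : List ℕ} :
    Contains001 l ↔ ∃ a b, a < b ∧ [a, a, b].Sublist l := by
  rw [Contains001]
  constructor
  · rintro ⟨i, j, k, hij, hjk, hk, hfirst, hlast⟩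
    rw [List.getD_eq_getElem _ _ (by omega), List.getD_eq_getElem _ _ (by omega)] at hfirst
    rw [List.getD_eq_getElem _ _ (by omega), List.getD_eq_getElem _ _ hk] at hlast
    refine ⟨l[j], l[k], hlast, ?_⟩
    rw [List.sublist_iff_exists_fin_orderEmbedding_get_eq]
    let f : Fin 3 → Fin l.length := ![⟨i, by omega⟩, ⟨j, by omega⟩, ⟨k, hk⟩]
    have hf : StrictMono f := by
      refine Fin.strictMono_iff_lt_succ.mpr fun a => ?_
      fin_cases a <;> simpa [f, Fin.lt_def]
    refine ⟨OrderEmbedding.ofStrictMono f hf, fun ix => ?_⟩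
    fin_cases ix <;> simp [f, hfirst]
  · rintro ⟨a, b, hab, h⟩
    obtain ⟨f, hf⟩ := List.sublist_iff_exists_fin_orderEmbedding_get_eq.mp h
    refine ⟨(f 0 : ℕ), f 1, f 2, f.strictMono (by simp), f.strictMono (by simp [Fin.lt_def]),
      (f 2).isLt, ?_⟩
    have h0 := hf 0
    have h1 := hf 1
    have h2 := hf 2
    simp only [List.get_eq_getElem] at h0 h1 h2
    simp [← h0, ← h1, ← h2, hab]

theorem Contains001.of_sublist {l l' : List ℕ} (h : Contains001 l) (hl : l.Sublist l') :
    Contains001 l' := by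
  obtain ⟨a, b, hab, h⟩ := contains001_iff_sublist.mp h
  exact contains001_iff_sublist.mpr ⟨a, b, hab, h.trans hl⟩

theorem IsAscSeq.of_append {l l' : List ℕ} (h : IsAscSeq (l ++ l')) (hl : l ≠ []) :
    IsAscSeq l := by
  obtain ⟨-, h0, hstep⟩ := h
  refine ⟨hl, ?_, fun i hi0 hi => ?_⟩
  · rwa [List.getD_append _ _ _ _ (List.length_pos_iff.mpr hl)] at h0
  · have := hstep i hi0 (by simp; omega)
    rwa [List.getD_append _ _ _ _ hi, List.take_append_of_le_length hi.le] at this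

def IsRangeThenDecreasing (m : ℕ) (l : List ℕ) : Prop :=
  ∃ t, l = List.range (m + 1) ++ t ∧ t.Pairwise (· ≥ ·) ∧ ∀ x ∈ t, x ≤ m

theorem isRangeThenDecreasing_iff {m : ℕ} {l : List ℕ} :
    IsRangeThenDecreasing m l ↔ l.take (m + 1) = List.range (m + 1) ∧
      (l.drop (m + 1)).Pairwise (· ≥ ·) ∧ ∀ x ∈ l.drop (m + 1), x ≤ m := by
  constructor
  · rintro ⟨t, rfl, ht⟩
    simpa using ht
  · rintro ⟨htake, ht⟩
    exact ⟨_, by rw [← htake, List.take_append_drop], ht⟩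

namespace IsRangeThenDecreasing

variable {m : ℕ} {l : List ℕ}

theorem not_contains001 (h : IsRangeThenDecreasing m l) : ¬Contains001 l := by
  obtain ⟨t, rfl, ht, -⟩ := h
  rw [contains001_iff_sublist]
  rintro ⟨a, b, hab, h⟩
  obtain ⟨l₁, l₂, hsplit, h₁, h₂⟩ := List.sublist_append_iff.mp h
  have hrange : ¬[a, a].Sublist (List.range (m + 1)) :=
    List.nodup_iff_sublist.mp List.nodup_range a
  have ht : ¬[a, b].Sublist t := fun hs => by
    have := ht.sublist hs
    simp at this
    omega
  rcases l₁ with _ | ⟨_, _ | ⟨_, _ | ⟨_, _ | _⟩⟩⟩ <;> simp at hsplit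
  · obtain rfl := hsplit
    exact ht ((List.sublist_cons_self _ _).trans h₂)
  · obtain ⟨rfl, rfl⟩ := hsplit
    exact ht h₂
  · obtain ⟨rfl, rfl, rfl⟩ := hsplit
    exact hrange h₁
  · obtain ⟨rfl, rfl, rfl, rfl⟩ := hsplit
    exact hrange ((List.sublist_append_left [a, a] [b]).trans h₁)

theorem unique {m' : ℕ} (h : IsRangeThenDecreasing m l) (h' : IsRangeThenDecreasing m' l) :
    m = m' := by
  wlog hle : m ≤ m' generalizing m m'
  · exact (this h' h (by omega)).symm
  obtain ⟨t, rfl, -, ht⟩ := h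
  obtain ⟨t', hl, -⟩ := h'
  by_contra hne
  obtain ⟨c, rfl⟩ := Nat.exists_eq_add_of_lt (lt_of_le_of_ne hle hne)
  rw [show m + c + 1 + 1 = (m + 1) + (c + 1) by omega, List.range_add (n := m + 1),
    List.append_assoc] at hl
  have := ht (m + 1) (by simp [List.append_cancel_left hl])
  omega

theorem isAscSeq (h : IsRangeThenDecreasing m l) : IsAscSeq l := by
  obtain ⟨t, rfl, -, ht⟩ := h
  refine ⟨by simp, by simp, fun i hi0 hi => ?_⟩
  rcases lt_or_ge i (m + 1) with him | him
  · rw [List.getD_append _ _ _ _ (by simpa using him),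
      List.take_append_of_le_length (by simp; omega), List.take_range, ascList_range,
      List.getD_eq_getElem _ _ (by simpa using him), List.getElem_range]
    omega
  · have hti : i - (m + 1) < t.length := by simp at hi; omega
    have hle : t[i - (m + 1)] ≤ m := ht _ (List.getElem_mem hti)
    have hasc : m ≤ ascList ((List.range (m + 1) ++ t).take i) := by
      rw [List.take_append, List.take_of_length_le (by simpa)]
      exact (ascList_range (m + 1)).ge.trans (ascList_le_ascList_append _ _)
    rw [List.getD_append_right _ _ _ _ (by simpa), List.length_range,
      List.getD_eq_getElem _ _ hti]
    omega

theorem exists_append_singleton {x : ℕ} (h : IsRangeThenDecreasing m l)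
    (hx : x ≤ ascList l + 1) (havoid : ¬Contains001 (l ++ [x])) :
    ∃ m', IsRangeThenDecreasing m' (l ++ [x]) := by
  obtain ⟨t, rfl, ht, htm⟩ := h
  rcases t.eq_nil_or_concat with rfl | ⟨t, y, rfl⟩
  · rw [List.append_nil, ascList_range] at hx
    rcases Nat.lt_or_eq_of_le hx with hx | rfl
    · exact ⟨m, [x], by simp, by simp, by simpa using Nat.le_of_lt_succ hx⟩
    · exact ⟨m + 1, [], by simp [List.range_succ], by simp, by simp⟩
  · rw [List.concat_eq_append] at ht htm ⊢
    have hym : y ≤ m := htm y (by simp)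
    -- the two letters `y` of `range (m + 1)` and of the tail, then `x`, would form a `001`
    have hxy : x ≤ y := by
      by_contra! hyx
      refine havoid (contains001_iff_sublist.mpr ⟨y, x, hyx, ?_⟩)
      rw [List.append_assoc]
      refine List.Sublist.append (l₁ := [y]) (List.singleton_sublist.mpr (by simpa using hym)) ?_
      exact List.Sublist.append (l₁ := [y]) (List.singleton_sublist.mpr (by simp)) (.refl _)
    refine ⟨m, t ++ [y] ++ [x], by simp, ?_, ?_⟩
    · refine List.pairwise_append.mpr ⟨ht, List.pairwise_singleton _ _, ?_⟩
      simp only [List.mem_singleton, forall_eq]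
      intro a ha
      rcases List.mem_append.mp ha with ha | ha
      · exact hxy.trans ((List.pairwise_append.mp ht).2.2 a ha y (by simp))
      · simpa [List.mem_singleton.mp ha] using hxy
    · rintro a ha
      rcases List.mem_append.mp ha with ha | ha
      · exact htm a ha
      · exact List.mem_singleton.mp ha ▸ hxy.trans hym

end IsRangeThenDecreasing

theorem IsAscSeq.exists_isRangeThenDecreasing {l : List ℕ} (h : IsAscSeq l)
    (havoid : ¬Contains001 l) : ∃ m, IsRangeThenDecreasing m l := by
  induction l using List.reverseRecOn with
  | nil => exact absurd rfl h.1
  | append_singleton l x ih =>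
    rcases eq_or_ne l [] with rfl | hl
    · have hx : x = 0 := h.2.1
      exact ⟨0, [], by simp [hx], by simp, by simp⟩
    have hx : x ≤ ascList l + 1 := by
      simpa [List.getD_append_right, List.take_append_of_le_length] using
        h.2.2 l.length (List.length_pos_iff.mpr hl) (by simp)
    obtain ⟨m, hm⟩ := ih (h.of_append hl)
      (fun h' => havoid (h'.of_sublist (List.sublist_append_left _ _)))
    exact hm.exists_append_singleton hx havoid

theorem isAscSeq_and_not_contains001_iff {l : List ℕ} :
    IsAscSeq l ∧ ¬Contains001 l ↔ ∃ m, IsRangeThenDecreasing m l :=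
  ⟨fun ⟨h, havoid⟩ => h.exists_isRangeThenDecreasing havoid,
    fun ⟨_, hm⟩ => ⟨hm.isAscSeq, hm.not_contains001⟩⟩

def decreasingLists : ℕ → ℕ → Finset (List ℕ)
  | 0, _ => {[]}
  | L + 1, m => (Finset.range (m + 1)).biUnion fun v => (decreasingLists L v).image (v :: ·)

theorem mem_decreasingLists {L m : ℕ} {l : List ℕ} :
    l ∈ decreasingLists L m ↔ l.length = L ∧ l.Pairwise (· ≥ ·) ∧ ∀ x ∈ l, x ≤ m := by
  induction L generalizing m l with
  | zero =>
    simp only [decreasingLists, Finset.mem_singleton, List.length_eq_zero_iff]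
    constructor
    · rintro rfl
      simp
    · exact fun h => h.1
  | succ L ih =>
    simp only [decreasingLists, Finset.mem_biUnion, Finset.mem_range, Finset.mem_image, ih]
    constructor
    · rintro ⟨v, hv, t, ⟨rfl, ht, htv⟩, rfl⟩
      refine ⟨rfl, List.pairwise_cons.mpr ⟨htv, ht⟩, ?_⟩
      simpa using ⟨by omega, fun x hx => (htv x hx).trans (by omega)⟩
    · rintro ⟨hlen, hl, hlm⟩
      obtain ⟨v, t, rfl⟩ := List.exists_cons_of_length_eq_add_one hlen
      obtain ⟨hvt, ht⟩ := List.pairwise_cons.mp hl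
      exact ⟨v, Nat.lt_succ_of_le (hlm v (by simp)), t, ⟨by simpa using hlen, ht, hvt⟩, rfl⟩

theorem sum_range_add_choose (L m : ℕ) :
    ∑ v ∈ Finset.range (m + 1), (L + v).choose v = (L + m + 1).choose m := by
  induction m with
  | zero => simp
  | succ m ih =>
    rw [Finset.sum_range_succ, ih, show L + (m + 1) + 1 = (L + m + 1) + 1 by omega,
      Nat.choose_succ_succ' (L + m + 1), show L + (m + 1) = L + m + 1 by omega]

theorem card_decreasingLists (L m : ℕ) : (decreasingLists L m).card = (L + m).choose m := by
  induction L generalizing m with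
  | zero => simp [decreasingLists]
  | succ L ih =>
    rw [decreasingLists, Finset.card_biUnion]
    · simp_rw [Finset.card_image_of_injective _ (List.cons_injective), ih]
      rw [sum_range_add_choose, Nat.add_right_comm]
    · intro v _ w _ hvw
      simp only [Function.onFun, Finset.disjoint_left, Finset.mem_image]
      rintro _ ⟨t, -, rfl⟩ ⟨t', -, h⟩
      exact hvw (List.cons_eq_cons.mp h).1.symm

def rangeThenDecreasingLists (n : ℕ) : Finset (List ℕ) :=
  (Finset.range n).biUnion fun m =>
    (decreasingLists (n - 1 - m) m).image (List.range (m + 1) ++ ·)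

theorem mem_rangeThenDecreasingLists {n : ℕ} {l : List ℕ} :
    l ∈ rangeThenDecreasingLists n ↔ l.length = n ∧ ∃ m, IsRangeThenDecreasing m l := by
  simp only [rangeThenDecreasingLists, Finset.mem_biUnion, Finset.mem_range, Finset.mem_image,
    mem_decreasingLists]
  constructor
  · rintro ⟨m, hm, t, ⟨hlen, ht⟩, rfl⟩
    exact ⟨by simp; omega, m, t, rfl, ht⟩
  · rintro ⟨rfl, m, t, rfl, ht⟩
    exact ⟨m, by simp; omega, t, ⟨by simp, ht⟩, rfl⟩

theorem card_rangeThenDecreasingLists {n : ℕ} (hn : 1 ≤ n) :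
    (rangeThenDecreasingLists n).card = 2 ^ (n - 1) := by
  rw [rangeThenDecreasingLists, Finset.card_biUnion]
  · have hcard : ∀ m ∈ Finset.range n,
        ((decreasingLists (n - 1 - m) m).image (List.range (m + 1) ++ ·)).card =
          (n - 1).choose m := by
      intro m hm
      rw [Finset.card_image_of_injective _ fun _ _ => List.append_cancel_left,
        card_decreasingLists, Nat.sub_add_cancel (by simp at hm; omega)]
    rw [Finset.sum_congr rfl hcard, ← Nat.sum_range_choose, Nat.sub_add_cancel hn]
  · intro m _ m' _ hne
    simp only [Function.onFun, Finset.disjoint_left, Finset.mem_image, mem_decreasingLists]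
    rintro _ ⟨t, ⟨-, ht⟩, rfl⟩ ⟨t', ⟨-, ht'⟩, h⟩
    exact hne (IsRangeThenDecreasing.unique ⟨t, rfl, ht⟩ ⟨t', h.symm, ht'⟩)

/-- An ascent sequence avoids 001 iff it is a strictly increasing prefix `0,1,…,m`
followed by a weakly decreasing sequence of letters at most `m`; consequently there are
`2^(n-1)` such sequences of length `n`. -/
theorem stmt4 (n : ℕ) (hn : 1 ≤ n) :
    (∀ l : List ℕ, IsAscSeq l →
      (¬ Contains001 l ↔ ∃ m, l.take (m + 1) = List.range (m + 1) ∧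
        (l.drop (m + 1)).Pairwise (· ≥ ·) ∧ ∀ x ∈ l.drop (m + 1), x ≤ m)) ∧
    {l : List ℕ | l.length = n ∧ IsAscSeq l ∧ ¬ Contains001 l}.ncard = 2 ^ (n - 1) := by
  refine ⟨fun l hl => ?_, ?_⟩
  · simp only [← isRangeThenDecreasing_iff, ← isAscSeq_and_not_contains001_iff, hl, true_and]
  · have hset : {l : List ℕ | l.length = n ∧ IsAscSeq l ∧ ¬ Contains001 l} =
        ↑(rangeThenDecreasingLists n) := Set.ext fun l => by
      rw [Finset.mem_coe, mem_rangeThenDecreasingLists, ← isAscSeq_and_not_contains001_iff]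
      rfl
    rw [hset, Set.ncard_coe_finset, card_rangeThenDecreasingLists hn]
end

section
/- For a pattern p, the set of ascent sequences avoiding p consists solely of restricted growth functions if and only if p is a subpattern of 01012. -/
/-- A restricted growth function: starts with 0, and every occurrence of a letter `k+1`
is preceded by an occurrence of `k`. -/
def IsRGF (l : List ℕ) : Prop :=
  l.getD 0 0 = 0 ∧
    ∀ i < l.length, ∀ k, l.getD i 0 = k + 1 → ∃ j < i, l.getD j 0 = k

/-- `l` contains the pattern `p`: there is a subsequence of `l` order-isomorphic to `p`. -/
def ContainsPat (l p : List ℕ) : Prop :=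
  ∃ s : List ℕ, s.Sublist l ∧ s.length = p.length ∧
    ∀ i j, i < p.length → j < p.length →
      (p.getD i 0 < p.getD j 0 ↔ s.getD i 0 < s.getD j 0)

theorem containsPat_iff_exists_orderEmbedding {l p : List ℕ} :
    ContainsPat l p ↔
      ∃ f : Fin p.length ↪o Fin l.length, ∀ i j, p.get i < p.get j ↔ l.get (f i) < l.get (f j) := by
  constructor
  · rintro ⟨s, hsl, hlen, hiso⟩
    obtain ⟨g, hg⟩ := List.sublist_iff_exists_fin_orderEmbedding_get_eq.mp hsl
    refine ⟨(Fin.castOrderIso hlen.symm).toOrderEmbedding.trans g, fun i j => ?_⟩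
    have hi : i.1 < s.length := by rw [hlen]; exact i.2
    have hj : j.1 < s.length := by rw [hlen]; exact j.2
    have key := hiso i j i.2 j.2
    rw [List.getD_eq_getElem _ _ i.2, List.getD_eq_getElem _ _ j.2,
      List.getD_eq_getElem _ _ hi, List.getD_eq_getElem _ _ hj] at key
    exact key.trans (Iff.of_eq (congrArg₂ _ (hg ⟨i, hi⟩) (hg ⟨j, hj⟩)))
  · rintro ⟨f, hf⟩
    refine ⟨List.ofFn fun i => l.get (f i), ?_, List.length_ofFn, fun i j hi hj => ?_⟩
    · exact List.sublist_iff_exists_fin_orderEmbedding_get_eq.mpr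
        ⟨(Fin.castOrderIso List.length_ofFn).toOrderEmbedding.trans f, fun i => by simp; rfl⟩
    · simpa [List.getD_eq_getElem, hi, hj] using hf ⟨i, hi⟩ ⟨j, hj⟩

theorem ContainsPat.trans {l q p : List ℕ} (hq : ContainsPat l q) (hp : ContainsPat q p) :
    ContainsPat l p := by
  rw [containsPat_iff_exists_orderEmbedding] at *
  obtain ⟨f, hf⟩ := hq
  obtain ⟨g, hg⟩ := hp
  exact ⟨g.trans f, fun i j => (hg i j).trans (hf (g i) (g j))⟩

theorem containsPat_01012_of_indices {l : List ℕ} {i₀ i₁ i₂ i₃ i₄ : ℕ} (h₀₁ : i₀ < i₁)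
    (h₁₂ : i₁ < i₂) (h₂₃ : i₂ < i₃) (h₃₄ : i₃ < i₄) (h₄ : i₄ < l.length)
    (h₀₂ : l.getD i₀ 0 = l.getD i₂ 0) (h₁₃ : l.getD i₁ 0 = l.getD i₃ 0)
    (h₀₁' : l.getD i₀ 0 < l.getD i₁ 0) (h₁₄ : l.getD i₁ 0 < l.getD i₄ 0) :
    ContainsPat l [0, 1, 0, 1, 2] := by
  let idx : Fin 5 → Fin l.length :=
    ![⟨i₀, by omega⟩, ⟨i₁, by omega⟩, ⟨i₂, by omega⟩, ⟨i₃, by omega⟩, ⟨i₄, h₄⟩]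
  have hmono : StrictMono idx := by
    refine Fin.strictMono_iff_lt_succ.2 fun t => ?_
    fin_cases t <;> simp [idx, Fin.lt_def] <;> omega
  refine containsPat_iff_exists_orderEmbedding.2 ⟨OrderEmbedding.ofStrictMono idx hmono, ?_⟩
  simp only [List.getD_eq_getElem?_getD, List.getElem?_eq_getElem (by omega : i₀ < l.length),
    List.getElem?_eq_getElem (by omega : i₁ < l.length),
    List.getElem?_eq_getElem (by omega : i₂ < l.length),
    List.getElem?_eq_getElem (by omega : i₃ < l.length), List.getElem?_eq_getElem h₄,
    Option.getD_some] at h₀₂ h₁₃ h₀₁' h₁₄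
  intro s t
  fin_cases s <;> fin_cases t <;> simp [idx] <;> omega

open Finset

theorem zip_tail_eq_map_range (l : List ℕ) :
    l.zip l.tail = (List.range (l.length - 1)).map fun j => (l.getD j 0, l.getD (j + 1) 0) := by
  refine List.ext_getElem (by simp) fun j h _ => ?_
  rw [List.length_zip, List.length_tail, min_eq_right (Nat.sub_le _ _)] at h
  simp [List.getElem?_eq_getElem (by omega : j < l.length),
    List.getElem?_eq_getElem (by omega : j + 1 < l.length)]

theorem ascList_eq_card (l : List ℕ) :
    ascList l = #{j ∈ range (l.length - 1) | l.getD j 0 < l.getD (j + 1) 0} := by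
  rw [ascList, zip_tail_eq_map_range, List.countP_map, List.countP_eq_length_filter]
  rfl

theorem ascList_take_eq_card (l : List ℕ) {i : ℕ} (hi : i ≤ l.length) :
    ascList (l.take i) = #{j ∈ range (i - 1) | l.getD j 0 < l.getD (j + 1) 0} := by
  rw [ascList_eq_card, List.length_take_of_le hi]
  refine congrArg card (filter_congr fun j hj => ?_)
  rw [mem_range] at hj
  simp only [List.getD_eq_getElem?_getD, List.getElem?_take_of_lt (by omega : j < i),
    List.getElem?_take_of_lt (by omega : j + 1 < i)]

theorem exists_ascents_top_eq {v : ℕ → ℕ} {n k : ℕ} (hv : ∀ j ≤ n, v j < k)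
    (hk : k ≤ #{j ∈ range n | v j < v (j + 1)}) :
    ∃ j₁ j₂, j₁ < j₂ ∧ j₂ < n ∧ v j₂ < v (j₂ + 1) ∧ v (j₁ + 1) = v (j₂ + 1) := by
  have hcard : #(Ioo 0 k) < #{j ∈ range n | v j < v (j + 1)} := by
    have := hv 0 (Nat.zero_le n)
    rw [Nat.card_Ioo]
    omega
  have htop : ∀ j ∈ ({j ∈ range n | v j < v (j + 1)} : Finset ℕ), v (j + 1) ∈ Ioo 0 k := by
    intro j hj
    rw [mem_filter, mem_range] at hj
    exact mem_Ioo.2 ⟨by omega, hv (j + 1) hj.1⟩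
  obtain ⟨x, hx, y, hy, hxy, hxy'⟩ := exists_ne_map_eq_of_card_lt_of_maps_to hcard htop
  rw [mem_filter, mem_range] at hx hy
  rcases lt_or_gt_of_ne hxy with h | h
  · exact ⟨x, y, h, hy.1, hy.2, hxy'⟩
  · exact ⟨y, x, h, hx.1, hx.2, hxy'.symm⟩

def IsRGFBefore (v : ℕ → ℕ) (n : ℕ) : Prop :=
  ∀ i < n, ∀ k, v i = k + 1 → ∃ j < i, v j = k

namespace IsRGFBefore

variable {v : ℕ → ℕ} {n : ℕ}

theorem exists_eq_of_lt (h : IsRGFBefore v n) {i k : ℕ} (hi : i < n) (hk : k < v i) :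
    ∃ j < i, v j = k := by
  induction i using Nat.strong_induction_on with
  | _ i ih =>
    obtain ⟨j, hji, hj⟩ := h i hi (v i - 1) (by omega)
    rcases (show k ≤ v j by omega).eq_or_lt with rfl | hkj
    · exact ⟨j, hji, rfl⟩
    · obtain ⟨j', hj'j, hj'⟩ := ih j hji (hji.trans hi) hkj
      exact ⟨j', hj'j.trans hji, hj'⟩

theorem lt_of_forall_ne (h : IsRGFBefore v n) {k : ℕ} (hk : ∀ j < n, v j ≠ k) {i : ℕ}
    (hi : i < n) : v i < k := by
  by_contra! hki
  rcases hki.eq_or_lt with hki | hki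
  · exact hk i hi hki.symm
  · obtain ⟨j, hji, hj⟩ := h.exists_eq_of_lt hi hki
    exact hk j (hji.trans hi) hj

end IsRGFBefore

theorem exists_first_violation_of_not_isRGFBefore {v : ℕ → ℕ} {n : ℕ}
    (h : ¬ IsRGFBefore v n) :
    ∃ i < n, ∃ k, v i = k + 1 ∧ (∀ j < i, v j ≠ k) ∧ IsRGFBefore v i := by
  classical
  have hex : ∃ i, i < n ∧ ∃ k, v i = k + 1 ∧ ∀ j < i, v j ≠ k := by
    simpa [IsRGFBefore] using h
  obtain ⟨hn, k, hk, hne⟩ := Nat.find_spec hex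
  refine ⟨Nat.find hex, hn, k, hk, hne, fun j hj m hm => ?_⟩
  by_contra! hjm
  exact Nat.find_min hex hj ⟨hj.trans hn, m, hm, hjm⟩

theorem IsAscSeq.containsPat_01012_of_not_isRGF {l : List ℕ} (hl : IsAscSeq l)
    (hrgf : ¬ IsRGF l) : ContainsPat l [0, 1, 0, 1, 2] := by
  obtain ⟨-, hl₀, hasc⟩ := hl
  let v : ℕ → ℕ := fun j => l.getD j 0
  obtain ⟨i, hi, k, hik, hk, hrgfi⟩ :
      ∃ i < l.length, ∃ k, v i = k + 1 ∧ (∀ j < i, v j ≠ k) ∧ IsRGFBefore v i :=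
    exists_first_violation_of_not_isRGFBefore fun h => hrgf ⟨hl₀, h⟩
  have hi₀ : 0 < i := Nat.pos_of_ne_zero fun h => by
    subst h
    change l.getD 0 0 = k + 1 at hik
    omega
  have hlt : ∀ j < i, v j < k := fun j hj => hrgfi.lt_of_forall_ne hk hj
  have hascents : k ≤ #{j ∈ range (i - 1) | v j < v (j + 1)} := by
    have h := hasc i hi₀ hi
    rw [ascList_take_eq_card l hi.le] at h
    change v i ≤ #{j ∈ range (i - 1) | v j < v (j + 1)} + 1 at h
    omega
  obtain ⟨j₁, j₂, hj₁₂, hj₂, hasc₂, htop⟩ :=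
    exists_ascents_top_eq (fun j hj => hlt j (by omega)) hascents
  have hsep : j₁ + 1 < j₂ := by
    by_contra!
    obtain rfl : j₂ = j₁ + 1 := by omega
    omega
  obtain ⟨j₀, hj₀, hv₀⟩ := hrgfi.exists_eq_of_lt (by omega : j₁ + 1 < i) (htop ▸ hasc₂)
  exact containsPat_01012_of_indices hj₀ hsep (by omega) (by omega) hi hv₀ htop
    (show v j₀ < v (j₁ + 1) by omega)
    (show v (j₁ + 1) < v i by have := hlt (j₁ + 1) (by omega); omega)

theorem containsPat_01012_01013 : ContainsPat [0, 1, 0, 1, 2] [0, 1, 0, 1, 3] := by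
  refine ⟨[0, 1, 0, 1, 2], .refl _, rfl, fun i j hi hj => ?_⟩
  simp only [List.length_cons, List.length_nil] at hi hj
  interval_cases i <;> interval_cases j <;> decide

theorem isAscSeq_01013 : IsAscSeq [0, 1, 0, 1, 3] := by
  refine ⟨List.cons_ne_nil _ _, rfl, fun i _ hi => ?_⟩
  simp only [List.length_cons, List.length_nil] at hi
  interval_cases i <;> decide

theorem not_isRGF_01013 : ¬ IsRGF [0, 1, 0, 1, 3] := by
  rintro ⟨-, h⟩
  obtain ⟨j, hj, hv⟩ := h 4 (by simp) 2 rfl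
  interval_cases j <;> simp at hv

theorem stmt10_general (p : List ℕ) :
    (∀ l : List ℕ, IsAscSeq l → ¬ ContainsPat l p → IsRGF l) ↔
      ContainsPat [0, 1, 0, 1, 2] p := by
  constructor
  · intro h
    refine containsPat_01012_01013.trans (by_contra fun h01013 => ?_)
    exact not_isRGF_01013 (h _ isAscSeq_01013 h01013)
  · intro hp l hl hav
    by_contra hrgf
    exact hav ((hl.containsPat_01012_of_not_isRGF hrgf).trans hp)

/-- The ascent sequences avoiding a (nonempty) pattern `p` are all restricted growth
functions if and only if `p` is a subpattern of 01012. -/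
theorem stmt10 (p : List ℕ) (hp : p ≠ []) :
    (∀ l : List ℕ, IsAscSeq l → ¬ ContainsPat l p → IsRGF l) ↔
      ContainsPat [0, 1, 0, 1, 2] p :=
  stmt10_general p
end

section
/- An ascent sequence contains the pattern 101 if and only if it contains the pattern 0101. Hence the sets of ascent sequences of length n avoiding 101 and avoiding 0101 coincide. -/
/-- A sequence contains the pattern 101. -/
def Contains101 (l : List ℕ) : Prop :=
  ∃ i j k, i < j ∧ j < k ∧ k < l.length ∧
    l.getD j 0 < l.getD i 0 ∧ l.getD i 0 = l.getD k 0

/-- A sequence contains the pattern 0101. -/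
def Contains0101 (l : List ℕ) : Prop :=
  ∃ i j k m, i < j ∧ j < k ∧ k < m ∧ m < l.length ∧
    l.getD i 0 = l.getD k 0 ∧ l.getD j 0 = l.getD m 0 ∧ l.getD i 0 < l.getD j 0

/-!
An occurrence `b a b` of 101 with `a` not occurring before the first `b` forces many small
letters early on: at the first position `s` holding a letter larger than `a`, the ascent
condition gives at least `a` ascents among the letters before `s`, all of which are smaller
than `a`. Their tops lie in `[1, a - 1]`, so two ascents share a top `c`, which yields a new
occurrence of 101 with top letter `c < b`. Descending on the top letter, eventually the bottom
letter occurs before the first top letter, and that is an occurrence of 0101.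
-/

theorem List.countP_eq_card_filter_range {α : Type*} (l : List α) (p : α → Bool) (d : α) :
    l.countP p = ((Finset.range l.length).filter (fun i => p (l.getD i d))).card := by
  induction l with
  | nil => simp
  | cons x l ih =>
    simp only [List.countP_cons, List.length_cons, Finset.card_filter,
      Finset.sum_range_succ', List.getD_cons_succ, List.getD_cons_zero] at *
    rw [ih]

theorem List.getD_take_of_lt {α : Type*} (l : List α) (d : α) {s t : ℕ} (h : t < s) :
    (l.take s).getD t d = l.getD t d := by
  simp [List.getD_eq_getElem?_getD, h]

theorem ascList_eq_card_filter (m : List ℕ) :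
    ascList m = ((Finset.range (m.length - 1)).filter
      (fun t => m.getD t 0 < m.getD (t + 1) 0)).card := by
  have hlen : (m.zip m.tail).length = m.length - 1 := by simp
  rw [ascList, List.countP_eq_card_filter_range _ _ (0, 0), hlen]
  refine congrArg _ (Finset.filter_congr fun t ht => ?_)
  have ht : t + 1 < m.length := by have := Finset.mem_range.1 ht; omega
  rw [List.getD_eq_getElem _ _ (by omega), List.getElem_zip,
    List.getD_eq_getElem m 0 (by omega), List.getD_eq_getElem m 0 ht]
  simp [List.getElem_tail]

theorem Contains0101.contains101 {l : List ℕ} (h : Contains0101 l) : Contains101 l := by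
  obtain ⟨i, j, k, m, -, hjk, hkm, hm, hik, hjm, hij⟩ := h
  exact ⟨j, k, m, hjk, hkm, hm, hik ▸ hij, hjm⟩

theorem contains101_of_lt_ascList {m : List ℕ} {c : ℕ} (hm : ∀ x ∈ m, x ≤ c)
    (hasc : c < ascList m) : Contains101 m := by
  rw [ascList_eq_card_filter] at hasc
  set S := (Finset.range (m.length - 1)).filter (fun t => m.getD t 0 < m.getD (t + 1) 0)
  have hS : ∀ t ∈ S, t + 1 < m.length ∧ m.getD t 0 < m.getD (t + 1) 0 := by
    intro t ht
    simp only [S, Finset.mem_filter, Finset.mem_range] at ht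
    exact ⟨by omega, ht.2⟩
  have htop : ∀ t ∈ S, m.getD (t + 1) 0 ∈ Finset.Icc 1 c := by
    intro t ht
    obtain ⟨hlen, hrise⟩ := hS t ht
    have := hm _ (List.getD_eq_getElem m 0 hlen ▸ List.getElem_mem hlen)
    simp only [Finset.mem_Icc]
    omega
  obtain ⟨t₁, ht₁, t₂, ht₂, hne, htops⟩ :=
    Finset.exists_ne_map_eq_of_card_lt_of_maps_to (by simpa using hasc) htop
  wlog h12 : t₁ < t₂ generalizing t₁ t₂
  · exact this t₂ ht₂ t₁ ht₁ hne.symm htops.symm (by omega)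
  obtain ⟨hlen, hrise⟩ := hS t₂ ht₂
  have hgap : t₁ + 1 ≠ t₂ := by
    rintro rfl
    omega
  exact ⟨t₁ + 1, t₂, t₂ + 1, by omega, by omega, hlen, htops ▸ hrise, htops⟩

theorem IsAscSeq.contains0101_or_exists_lower_101 {l : List ℕ} (hl : IsAscSeq l) {i j k : ℕ}
    (hij : i < j) (hjk : j < k) (hk : k < l.length) (hji : l.getD j 0 < l.getD i 0)
    (hik : l.getD i 0 = l.getD k 0) :
    Contains0101 l ∨ ∃ i' j' k', i' < j' ∧ j' < k' ∧ k' < l.length ∧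
      l.getD j' 0 < l.getD i' 0 ∧ l.getD i' 0 = l.getD k' 0 ∧ l.getD i' 0 < l.getD i 0 := by
  set a := l.getD j 0
  by_cases hearly : ∃ p < i, l.getD p 0 = a
  · obtain ⟨p, hpi, hpa⟩ := hearly
    exact .inl ⟨p, i, j, k, hpi, hij, hjk, hk, hpa, hik, hpa ▸ hji⟩
  push Not at hearly
  right
  have hex : ∃ s, a < l.getD s 0 := ⟨i, hji⟩
  set s := Nat.find hex
  have hs : a < l.getD s 0 := Nat.find_spec hex
  have hsi : s ≤ i := Nat.find_min' hex hji
  have hsmall : ∀ t < s, l.getD t 0 < a := fun t hts =>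
    lt_of_le_of_ne (not_lt.1 (Nat.find_min hex hts)) (hearly t (by omega))
  have hs0 : 0 < s := by
    refine Nat.pos_of_ne_zero fun h0 => ?_
    rw [h0, hl.2.1] at hs
    omega
  have ha : 0 < a := hl.2.1 ▸ hsmall 0 hs0
  have hasc : a ≤ ascList (l.take s) := by
    have := hl.2.2 s hs0 (by omega)
    omega
  have hbound : ∀ x ∈ l.take s, x ≤ a - 1 := by
    intro x hx
    obtain ⟨t, ht, rfl⟩ := List.mem_iff_getElem.1 hx
    rw [List.length_take] at ht
    rw [← List.getD_eq_getElem _ 0, List.getD_take_of_lt _ _ (by omega)]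
    have := hsmall t (by omega)
    omega
  obtain ⟨p, q, r, hpq, hqr, hr, hqp, hpr⟩ := contains101_of_lt_ascList hbound (by omega)
  have hrs : r < s := by rw [List.length_take] at hr; omega
  rw [List.getD_take_of_lt _ _ (by omega : p < s), List.getD_take_of_lt _ _ (by omega : q < s)]
    at hqp
  rw [List.getD_take_of_lt _ _ (by omega : p < s), List.getD_take_of_lt _ _ hrs] at hpr
  exact ⟨p, q, r, hpq, hqr, by omega, hqp, hpr, (hsmall p (by omega)).trans hji⟩

theorem IsAscSeq.contains0101_of_contains101 {l : List ℕ} (hl : IsAscSeq l)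
    (h : Contains101 l) : Contains0101 l := by
  obtain ⟨i, j, k, hij, hjk, hk, hji, hik⟩ := h
  induction hb : l.getD i 0 using Nat.strong_induction_on generalizing i j k with
  | _ b ih =>
    obtain h0101 | ⟨i', j', k', hij', hjk', hk', hji', hik', hlower⟩ :=
      hl.contains0101_or_exists_lower_101 hij hjk hk hji hik
    · exact h0101
    · exact ih _ (hb ▸ hlower) _ _ _ hij' hjk' hk' hji' hik' rfl

/-- An ascent sequence contains 101 iff it contains 0101; hence the 101-avoiding and
0101-avoiding ascent sequences of each length coincide. -/
theorem stmt11 :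
    (∀ l : List ℕ, IsAscSeq l → (Contains101 l ↔ Contains0101 l)) ∧
    ∀ n : ℕ,
      {l : List ℕ | l.length = n ∧ IsAscSeq l ∧ ¬ Contains101 l} =
      {l : List ℕ | l.length = n ∧ IsAscSeq l ∧ ¬ Contains0101 l} := by
  have hiff (l : List ℕ) (hl : IsAscSeq l) : Contains101 l ↔ Contains0101 l :=
    ⟨hl.contains0101_of_contains101, Contains0101.contains101⟩
  exact ⟨hiff, fun n => Set.ext fun l =>
    and_congr_right fun _ => and_congr_right fun hl => not_congr (hiff l hl)⟩
end
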